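/- arXiv:1301.0014 — 5 statements merged into one kernel-verified Lean document; each statement's English description precedes it below -/
import Mathlib

section
/- Let F be a finite field of order q. If H ⊆ F^n is a 1-perfect code, then the Vasil'ev–Schönheim code C(H,f) is a 1-perfect code in F^{qn+1}, for any function f : H → F. -/
open Finset

/-- The Vasil'ev–Schönheim code built from a set `H ⊆ F^n` and `f : H → F`. -/
def VScode {F : Type*} [Field F] [Fintype F] {n : ℕ}
    (H : Set (Fin n → F)) (f : H → F) :
    Set ((F → (Fin n → F)) × F) :=
  {x | ∃ hc : (∑ α, x.1 α) ∈ H,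
    x.2 = (∑ α : F, α * (∑ j, x.1 α j)) + f ⟨∑ α, x.1 α, hc⟩}

/-- Hamming distance on `F^{qn+1}` written as block families with a final coordinate. -/
def bdist {F : Type*} [Fintype F] [DecidableEq F] {n : ℕ}
    (x y : (F → (Fin n → F)) × F) : ℕ :=
  (Finset.univ.filter fun a : F × Fin n => x.1 a.1 a.2 ≠ y.1 a.1 a.2).card +
    (if x.2 = y.2 then 0 else 1)

/-!
Write a word as `(v, p)` with blocks `v α ∈ F^n`. Its syndrome `(∑ α v α, p - ∑ α α·|v α|)` is
additive, and `C(H,f)` is the set of words whose syndrome lies on the graph of `f`. Changing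
coordinate `j` of block `α` by `ε ≠ 0` shifts the syndrome by `(ε e_j, -αε)`, and changing `p` by `t`
shifts it by `(0, t)`. Hence the syndrome maps the radius-one ball around `(v, p)` bijectively onto the
pairs `(u, t)` with `u` at distance at most one from `∑ α v α`. Perfectness of `H` leaves exactly
one such `u` in `H`, and then `t = f u` is forced.
-/

theorem Set.BijOn.existsUnique_iff {α β : Type*} {f : α → β} {s : Set α} {t : Set β}
    {p : β → Prop} (hf : Set.BijOn f s t) : (∃! a, p (f a) ∧ a ∈ s) ↔ ∃! b, p b ∧ b ∈ t := by
  constructor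
  · rintro ⟨a, ⟨hpa, ha⟩, hu⟩
    refine ⟨f a, ⟨hpa, hf.mapsTo ha⟩, fun b ⟨hpb, hb⟩ => ?_⟩
    obtain ⟨a', ha', rfl⟩ := hf.surjOn hb
    rw [hu a' ⟨hpb, ha'⟩]
  · rintro ⟨b, ⟨hpb, hb⟩, hu⟩
    obtain ⟨a, ha, rfl⟩ := hf.surjOn hb
    exact ⟨a, ⟨hpb, ha⟩, fun a' ⟨hpa', ha'⟩ => hf.injOn ha' ha (hu _ ⟨hpa', hf.mapsTo ha'⟩)⟩

theorem hammingDist_le_one_iff {ι β : Type*} [Fintype ι] [DecidableEq ι] [AddGroup β]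
    [DecidableEq β] {x y : ι → β} :
    hammingDist x y ≤ 1 ↔ y = x ∨ ∃ i b, b ≠ 0 ∧ y = x + Pi.single i b := by
  constructor
  · intro h
    by_cases hxy : y = x
    · exact .inl hxy
    obtain ⟨i, hi⟩ := Function.ne_iff.1 hxy
    have hoff : ∀ j ≠ i, y j = x j := fun j hj => by
      by_contra hne
      exact hj (Finset.card_le_one.1 h j (by simpa [eq_comm] using hne) i
        (by simpa [eq_comm] using hi))
    refine .inr ⟨i, -x i + y i, fun h0 => hi (neg_add_eq_zero.1 h0).symm, funext fun j => ?_⟩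
    by_cases hj : j = i
    · subst hj; simp
    · simp [hj, hoff j hj]
  · rintro (rfl | ⟨i, b, -, rfl⟩)
    · simp
    · calc hammingDist x (x + Pi.single i b) ≤ ({i} : Finset ι).card := by
            refine Finset.card_le_card fun j hj => ?_
            by_contra hji
            simp_all
        _ = 1 := Finset.card_singleton i

theorem Pi.eq_and_eq_of_single_eq_single {ι M : Type*} [DecidableEq ι] [Zero M] {i j : ι}
    {a b : M} (ha : a ≠ 0) (h : (Pi.single i a : ι → M) = Pi.single j b) : i = j ∧ a = b := by
  have hi := congrFun h i
  by_cases hij : i = j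
  · subst hij
    simpa using hi
  · simp [hij] at hi
    exact absurd hi ha

section Syndrome

variable {F ι : Type*} [CommRing F] [Fintype F] [Fintype ι]

def syndrome (c : (F → ι → F) × F) : (ι → F) × F :=
  (∑ α, c.1 α, c.2 - ∑ α, α * ∑ j, c.1 α j)

theorem syndrome_add_snd (v : F → ι → F) (p t : F) :
    syndrome (v, p + t) = syndrome (v, p) + (0, t) := by
  simp only [syndrome, Prod.mk_add_mk, add_zero, Prod.mk.injEq, true_and]
  ring

variable [DecidableEq F] [DecidableEq ι]

theorem syndrome_add_single_single (v : F → ι → F) (p α : F) (j : ι) (ε : F) :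
    syndrome (v + Pi.single α (Pi.single j ε), p) =
      syndrome (v, p) + (Pi.single j ε, -(α * ε)) := by
  have hweight : ∑ β, β * ∑ k, (Pi.single α (Pi.single j ε) : F → ι → F) β k = α * ε := by
    rw [Fintype.sum_eq_single α fun β hβ => by simp [hβ]]
    simp
  simp only [syndrome, Prod.mk_add_mk, Pi.add_apply, Finset.sum_add_distrib, mul_add, hweight,
    Finset.sum_pi_single', Finset.mem_univ, if_true]
  congr 1
  ring

end Syndrome

section BlockDistance

variable {F : Type*} [Fintype F] [DecidableEq F] {n : ℕ}

theorem bdist_eq (x c : (F → Fin n → F) × F) :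
    bdist x c = hammingDist (Function.uncurry x.1) (Function.uncurry c.1) +
      if x.2 = c.2 then 0 else 1 :=
  rfl

theorem bdist_le_one_iff [AddCommGroup F] {x c : (F → Fin n → F) × F} :
    bdist x c ≤ 1 ↔
      (∃ t, c = (x.1, x.2 + t)) ∨
        ∃ α j ε, ε ≠ 0 ∧ c = (x.1 + Pi.single α (Pi.single j ε), x.2) := by
  obtain ⟨v, p⟩ := x
  obtain ⟨w, s⟩ := c
  have hsplit : bdist (v, p) (w, s) ≤ 1 ↔
      (hammingDist (Function.uncurry v) (Function.uncurry w) ≤ 1 ∧ s = p) ∨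
        hammingDist (Function.uncurry v) (Function.uncurry w) = 0 := by
    rw [bdist_eq]
    split_ifs <;> grind
  have huncurry : ∀ (a : F × Fin n) ε, Function.uncurry v + Pi.single a ε =
      Function.uncurry (v + Pi.single a.1 (Pi.single a.2 ε)) := fun a ε => by
    rw [← Pi.uncurry_single_single]; rfl
  have hshift : ∃ t, s = p + t := ⟨s - p, (add_sub_cancel p s).symm⟩
  rw [hsplit, hammingDist_le_one_iff, hammingDist_eq_zero]
  simp only [Prod.exists, huncurry, Function.uncurry_injective.eq_iff, Prod.mk.injEq]
  grind

end BlockDistance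

section VScode

variable {F : Type*} [Field F] [Fintype F] {n : ℕ}

theorem mem_VScode_iff {H : Set (Fin n → F)} {f : H → F} {c : (F → Fin n → F) × F} :
    c ∈ VScode H f ↔ ∃ h : (syndrome c).1 ∈ H, (syndrome c).2 = f ⟨_, h⟩ := by
  simp only [syndrome, sub_eq_iff_eq_add']
  rfl

variable [DecidableEq F]

theorem bijOn_syndrome_ball (x : (F → Fin n → F) × F) :
    Set.BijOn syndrome {c | bdist x c ≤ 1} {s | hammingDist (syndrome x).1 s.1 ≤ 1} := by
  obtain ⟨v, p⟩ := x
  refine ⟨?_, ?_, ?_⟩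
  · intro c hc
    rcases bdist_le_one_iff.1 hc with ⟨t, rfl⟩ | ⟨α, j, ε, hε, rfl⟩
    · simp [syndrome_add_snd]
    · rw [syndrome_add_single_single]
      exact hammingDist_le_one_iff.2 (.inr ⟨j, ε, hε, rfl⟩)
  · intro c hc c' hc' h
    rcases bdist_le_one_iff.1 hc with ⟨t, rfl⟩ | ⟨α, j, ε, hε, rfl⟩ <;>
      rcases bdist_le_one_iff.1 hc' with ⟨t', rfl⟩ | ⟨α', j', ε', hε', rfl⟩ <;>
      simp only [syndrome_add_snd, syndrome_add_single_single, add_right_inj, Prod.mk.injEq] at h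
    · rw [h.2]
    · exact absurd h.1.symm (Pi.single_ne_zero_iff.2 hε')
    · exact absurd h.1 (Pi.single_ne_zero_iff.2 hε)
    · obtain ⟨rfl, rfl⟩ := Pi.eq_and_eq_of_single_eq_single hε h.1
      rw [mul_right_cancel₀ hε (neg_inj.1 h.2)]
  · rintro ⟨u, s⟩ hs
    rcases hammingDist_le_one_iff.1 hs with rfl | ⟨j, δ, hδ, rfl⟩
    · refine ⟨(v, p + (s - (syndrome (v, p)).2)), bdist_le_one_iff.2 (.inl ⟨_, rfl⟩), ?_⟩
      rw [syndrome_add_snd]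
      ext <;> simp
    · refine ⟨(v + Pi.single (((syndrome (v, p)).2 - s) / δ) (Pi.single j δ), p),
        bdist_le_one_iff.2 (.inr ⟨_, _, _, hδ, rfl⟩), ?_⟩
      rw [syndrome_add_single_single]
      ext <;> simp [hδ]

end VScode

/-- If `H` is a 1-perfect code in `F^n`, then `C(H,f)` is a 1-perfect code
in `F^{qn+1}` for every `f : H → F`. -/
theorem stmt5 {F : Type*} [Field F] [Fintype F] [DecidableEq F] {n : ℕ}
    (H : Set (Fin n → F)) (f : H → F)
    (hH : ∀ v : Fin n → F, ∃! c, c ∈ H ∧ hammingDist v c ≤ 1) :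
    ∀ x : (F → (Fin n → F)) × F, ∃! c, c ∈ VScode H f ∧ bdist x c ≤ 1 := by
  intro x
  obtain ⟨c₀, ⟨hc₀H, hc₀⟩, hc₀_unique⟩ := hH (syndrome x).1
  simp only [mem_VScode_iff]
  refine ((bijOn_syndrome_ball x).existsUnique_iff
    (p := fun s => ∃ h : s.1 ∈ H, s.2 = f ⟨s.1, h⟩)).2 ⟨(c₀, f ⟨c₀, hc₀H⟩), ⟨⟨hc₀H, rfl⟩, hc₀⟩, ?_⟩
  rintro ⟨u, t⟩ ⟨⟨huH, ht⟩, hu⟩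
  obtain rfl := hc₀_unique u ⟨huH, hu⟩
  exact Prod.ext rfl ht
end

section
/- Let F be a finite field, H ⊆ F^n, f : H → F, j ∈ {1,…,n}, β ∈ F, and define f'(x) = f(x) + β·x_j. Let Π_j^β be the coordinate permutation of F^{qn+1} that, for each α ∈ F, places the j-th coordinate of block v_{α+β} into the j-th coordinate of block v_α, fixing all other coordinates. Then C(H,f') = Π_j^β(C(H,f)). -/
/-! `Π_j^β` is a bijection with inverse `Π_j^{-β}`. It preserves the block sum `c`, and since
position `j` of block `α` now carries the entry of block `α + β`, it lowers the check sum
`∑ α·|v_α|` by `β·c_j`; this is exactly compensated by passing from `f` to `f'`. -/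

open Finset

/-- The coordinate permutation `Π_j^β`: in position `j` of each block, block `α`
receives the entry of block `α + β`; all other coordinates are fixed. -/
def PiPerm {F : Type*} [Field F] {n : ℕ} [DecidableEq (Fin n)] (j : Fin n) (β : F)
    (x : (F → (Fin n → F)) × F) : (F → (Fin n → F)) × F :=
  (fun α i => if i = j then x.1 (α + β) i else x.1 α i, x.2)

theorem Fintype.sum_mul_comp_add_right {R : Type*} [Ring R] [Fintype R] (g : R → R) (b : R) :
    ∑ a, a * g (a + b) = ∑ a, a * g a - b * ∑ a, g a := by
  rw [← Equiv.sum_comp (Equiv.subRight b)]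
  simp only [Equiv.subRight_apply, sub_add_cancel, sub_mul, sum_sub_distrib, mul_sum]

section PiPerm

variable {F : Type*} [Field F] {n : ℕ} (j : Fin n)

@[simp]
theorem PiPerm_zero (x : (F → (Fin n → F)) × F) : PiPerm j 0 x = x := by
  ext α i
  · by_cases h : i = j <;> simp [PiPerm, h]
  · rfl

theorem PiPerm_PiPerm (β γ : F) (x : (F → (Fin n → F)) × F) :
    PiPerm j β (PiPerm j γ x) = PiPerm j (β + γ) x := by
  ext α i
  · by_cases h : i = j <;> simp [PiPerm, h, add_assoc]
  · rfl

theorem leftInverse_PiPerm_neg (β : F) : Function.LeftInverse (PiPerm j (-β)) (PiPerm j β) :=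
  fun x => by rw [PiPerm_PiPerm, neg_add_cancel, PiPerm_zero]

theorem rightInverse_PiPerm_neg (β : F) : Function.RightInverse (PiPerm j (-β)) (PiPerm j β) :=
  fun x => by rw [PiPerm_PiPerm, add_neg_cancel, PiPerm_zero]

variable [Fintype F] (β : F) (x : (F → (Fin n → F)) × F)

theorem sum_fst_PiPerm : ∑ α, (PiPerm j β x).1 α = ∑ α, x.1 α := by
  ext i
  by_cases h : i = j
  · simpa [PiPerm, h] using Equiv.sum_comp (Equiv.addRight β) (fun α => x.1 α j)
  · simp [PiPerm, h]

theorem sum_mul_sum_fst_PiPerm :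
    ∑ α, α * ∑ i, (PiPerm j β x).1 α i
      = ∑ α, α * ∑ i, x.1 α i - β * (∑ α, x.1 α) j := by
  have column (i : Fin n) : ∑ α, α * (PiPerm j β x).1 α i
      = ∑ α, α * x.1 α i - if i = j then β * ∑ α, x.1 α j else 0 := by
    by_cases h : i = j
    · subst h
      simpa [PiPerm] using Fintype.sum_mul_comp_add_right (fun α => x.1 α i) β
    · simp [PiPerm, h]
  simp only [mul_sum]
  rw [sum_comm, Fintype.sum_congr _ _ column, sum_sub_distrib, sum_ite_eq', if_pos (mem_univ j),
    sum_comm, Finset.sum_apply]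

theorem PiPerm_mem_VScode_iff (H : Set (Fin n → F)) (f : H → F) :
    PiPerm j β x ∈ VScode H (fun c => f c + β * (c : Fin n → F) j) ↔ x ∈ VScode H f := by
  simp only [VScode, Set.mem_ofPred_eq, sum_fst_PiPerm, sum_mul_sum_fst_PiPerm]
  exact exists_congr fun _ => by rw [sub_add_add_cancel]; rfl

end PiPerm

/-- Adding the linear term `β·x_j` to `f` transforms the code `C(H,f)` by the
coordinate permutation `Π_j^β`. -/
theorem stmt6 {F : Type*} [Field F] [Fintype F] {n : ℕ}
    (H : Set (Fin n → F)) (f : H → F) (j : Fin n) (β : F) :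
    VScode H (fun x => f x + β * (x : Fin n → F) j)
      = PiPerm j β '' VScode H f := by
  rw [Set.image_eq_preimage_of_inverse (leftInverse_PiPerm_neg j β) (rightInverse_PiPerm_neg j β)]
  ext x
  rw [Set.mem_preimage, ← PiPerm_mem_VScode_iff j β (PiPerm j (-β) x), rightInverse_PiPerm_neg j β x]
end

section
/- Let F be a finite field, H a linear subspace of F^n, f : H → F quadratic with a fixed degree-≤2 polynomial representation, and for c ∈ H let Π^c = Π_1^{β_1^c} ∘ … ∘ Π_n^{β_n^c}, where β_i^c are the linear coefficients of x ↦ f(x+c) − f(x). Then Π^c ∘ Π^d = Π^{c+d} for all c, d ∈ H; i.e., c ↦ Π^c is a group homomorphism from (H,+) to the permutation group of F^{qn+1}. -/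
open Finset

/-- The coefficient of `X i` in `p(X + c) - p(X)`. -/
noncomputable def linCoeff {F : Type*} [Field F] {n : ℕ}
    (p : MvPolynomial (Fin n) F) (c : Fin n → F) (i : Fin n) : F :=
  MvPolynomial.coeff (Finsupp.single i 1)
    ((MvPolynomial.bind₁ (fun j => MvPolynomial.X j + MvPolynomial.C (c j)) p) - p)

/-- `Π^c = Π_1^{b 1} ∘ … ∘ Π_n^{b n}` where `b i = β_i^c`: position `j` of
block `α` receives the entry of block `α + b j`. -/
def PiVec {F : Type*} [Field F] {n : ℕ} (b : Fin n → F)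
    (x : (F → (Fin n → F)) × F) : (F → (Fin n → F)) × F :=
  (fun α i => x.1 (α + b i) i, x.2)

/-! The coefficient of `X i` in `p(X + c) - p(X)` is the constant term of `∂ᵢ(p(X + c) - p(X))`,
i.e. `∂ᵢp(c) - ∂ᵢp(0)`. For `p` of degree at most two, `∂ᵢp` is affine, so this is additive
in `c`; and composing the block shifts `PiVec b` and `PiVec b'` gives `PiVec (b + b')`. -/

theorem Finsupp.eq_zero_or_eq_single_one_of_degree_le_one {σ : Type*} {m : σ →₀ ℕ}
    (hm : m.degree ≤ 1) : m = 0 ∨ ∃ j, m = Finsupp.single j 1 := by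
  classical
  rcases Nat.le_one_iff_eq_zero_or_eq_one.mp hm with h | h
  · exact Or.inl ((Finsupp.degree_eq_zero_iff m).mp h)
  · obtain ⟨j, hj⟩ := Multiset.card_eq_one.mp ((Finsupp.card_toMultiset m).trans h)
    exact Or.inr ⟨j, by rw [Finsupp.toMultiset_eq_iff.mp hj, Multiset.toFinsupp_singleton]⟩

namespace MvPolynomial

variable {σ R : Type*}

section CommSemiring

variable [CommSemiring R]

theorem coeff_single_one_eq_constantCoeff_pderiv (i : σ) (q : MvPolynomial σ R) :
    coeff (Finsupp.single i 1) q = constantCoeff (pderiv i q) := by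
  rw [constantCoeff_eq, coeff_pderiv]
  simp

theorem pderiv_bind₁_X_add_C (c : σ → R) (i : σ) (p : MvPolynomial σ R) :
    pderiv i (bind₁ (fun j => X j + C (c j)) p) =
      bind₁ (fun j => X j + C (c j)) (pderiv i p) := by
  induction p using MvPolynomial.induction_on with
  | C a => simp
  | add p q hp hq => simp [hp, hq]
  | mul_X p j hp =>
    simp only [map_mul, bind₁_X_right, pderiv_mul, hp, map_add]
    rcases eq_or_ne i j with rfl | hij
    · simp
    · simp [pderiv_X_of_ne (Ne.symm hij)]

theorem constantCoeff_bind₁_X_add_C (c : σ → R) (q : MvPolynomial σ R) :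
    constantCoeff (bind₁ (fun j => X j + C (c j)) q) = eval c q := by
  rw [hom_bind₁, constantCoeff_comp_C]
  simp only [map_add, constantCoeff_X, constantCoeff_C, zero_add]
  rfl

theorem totalDegree_pderiv_le (i : σ) (p : MvPolynomial σ R) :
    (pderiv i p).totalDegree ≤ p.totalDegree - 1 := by
  refine Finset.sup_le fun m hm => ?_
  have hshift : m + Finsupp.single i 1 ∈ p.support := by
    rw [mem_support_iff, coeff_pderiv] at hm
    exact mem_support_iff.mpr (left_ne_zero_of_mul hm)
  have hdeg := le_totalDegree hshift
  rw [Finsupp.sum_add_index' (fun _ => rfl) (fun _ _ _ => rfl), Finsupp.sum_single_index rfl]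
    at hdeg
  omega

end CommSemiring

theorem eval_add_add_eval_zero [CommRing R] {g : MvPolynomial σ R} (hg : g.totalDegree ≤ 1)
    (c d : σ → R) : eval (c + d) g + eval 0 g = eval c g + eval d g := by
  simp only [eval_eq, ← Finset.sum_add_distrib, ← mul_add]
  refine Finset.sum_congr rfl fun m hm => congrArg _ ?_
  rcases Finsupp.eq_zero_or_eq_single_one_of_degree_le_one ((le_totalDegree hm).trans hg)
    with rfl | ⟨j, rfl⟩ <;> simp

end MvPolynomial

open MvPolynomial

theorem linCoeff_eq_eval_pderiv_sub {F : Type*} [Field F] {n : ℕ}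
    (p : MvPolynomial (Fin n) F) (c : Fin n → F) (i : Fin n) :
    linCoeff p c i = eval c (pderiv i p) - eval 0 (pderiv i p) := by
  rw [linCoeff, coeff_sub, coeff_single_one_eq_constantCoeff_pderiv,
    coeff_single_one_eq_constantCoeff_pderiv, pderiv_bind₁_X_add_C, constantCoeff_bind₁_X_add_C,
    eval_zero]

theorem linCoeff_add {F : Type*} [Field F] {n : ℕ} {p : MvPolynomial (Fin n) F}
    (hp : p.totalDegree ≤ 2) (c d : Fin n → F) :
    linCoeff p (c + d) = linCoeff p c + linCoeff p d := by
  funext i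
  have := eval_add_add_eval_zero ((totalDegree_pderiv_le i p).trans (by omega)) c d
  simp only [Pi.add_apply, linCoeff_eq_eval_pderiv_sub]
  linear_combination this

theorem PiVec_comp_PiVec {F : Type*} [Field F] {n : ℕ} (b b' : Fin n → F) :
    PiVec b ∘ PiVec b' = PiVec (b + b') := by
  funext x
  simp only [Function.comp_apply, PiVec, Pi.add_apply, add_assoc]

theorem stmt8_general {F : Type*} [Field F] {n : ℕ}
    (H : Submodule F (Fin n → F))
    (p : MvPolynomial (Fin n) F) (hp : p.totalDegree ≤ 2) :
    ∀ c d : H,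
      PiVec (linCoeff p (c : Fin n → F)) ∘ PiVec (linCoeff p (d : Fin n → F))
        = PiVec (linCoeff p ((c : Fin n → F) + (d : Fin n → F))) := by
  intro c d
  rw [PiVec_comp_PiVec, linCoeff_add hp]

/-- For quadratic `f`, the permutations `Π^c` satisfy `Π^c ∘ Π^d = Π^{c+d}`,
i.e. `c ↦ Π^c` is a homomorphism from `(H,+)` to permutations of `F^{qn+1}`. -/
theorem stmt8 {F : Type*} [Field F] [Fintype F] {n : ℕ}
    (H : Submodule F (Fin n → F)) (f : H → F)
    (p : MvPolynomial (Fin n) F) (hp : p.totalDegree ≤ 2)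
    (hf : ∀ x : H, f x = MvPolynomial.eval (x : Fin n → F) p) :
    ∀ c d : H,
      PiVec (linCoeff p (c : Fin n → F)) ∘ PiVec (linCoeff p (d : Fin n → F))
        = PiVec (linCoeff p ((c : Fin n → F) + (d : Fin n → F))) :=
  stmt8_general H p hp
end

section
/- Let F be a finite field of order q. The automorphism group of the Hamming graph on F^N has order (q!)^N · N!. -/
open Finset

/-- The Hamming graph on `F^N`: two words adjacent iff they differ in exactly
one coordinate. -/
def hammingGraph (F : Type*) [DecidableEq F] (N : ℕ) : SimpleGraph (Fin N → F) :=
  SimpleGraph.fromRel (fun x y => hammingDist x y = 1)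

/-!
An automorphism of the Hamming graph preserves graph distance, which is the Hamming distance.
A word `x` is determined by its Hamming distances to a fixed word `o` and to the words
`update o i c`, so an automorphism `φ` is determined by its values on these words. Since `φ` maps
each line `{update o i c | c}` into a line through `φ o`, in a direction `π i` with `π`
injective, reading off `φ` on these lines gives permutations `π` of the coordinates and `ψ i` of
the alphabet such that the standard automorphism `ofPerms π ψ` agrees with `φ` there, hence
everywhere. As `(π, ψ) ↦ ofPerms π ψ` is also injective, the automorphism group has
`N! · (q!)^N` elements.
-/

open Function

section hammingDist

variable {ι : Type*} [Fintype ι] [DecidableEq ι] {β : ι → Type*} [∀ i, DecidableEq (β i)]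

theorem hammingDist_update_right_add (x y : ∀ i, β i) (i : ι) (c : β i) :
    hammingDist x (update y i c) + (if x i = y i then 0 else 1)
      = hammingDist x y + (if x i = c then 0 else 1) := by
  simp only [hammingDist, card_filter]
  rw [← add_sum_erase _ _ (mem_univ i), ← add_sum_erase _ _ (mem_univ i)]
  have hoff : ∑ j ∈ univ.erase i, (if x j ≠ update y i c j then 1 else 0)
      = ∑ j ∈ univ.erase i, (if x j ≠ y j then 1 else 0) :=
    sum_congr rfl fun j hj => by rw [update_of_ne (ne_of_mem_erase hj)]
  rw [hoff, update_self]
  split_ifs <;> simp_all <;> omega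

theorem hammingDist_update_right_self (x : ∀ i, β i) (i : ι) (c : β i) :
    hammingDist x (update x i c) = if x i = c then 0 else 1 := by
  simpa [hammingDist_self] using hammingDist_update_right_add x x i c

theorem hammingDist_update_update_le_one (x : ∀ i, β i) (i : ι) (a b : β i) :
    hammingDist (update x i a) (update x i b) ≤ 1 := by
  have h := hammingDist_update_right_add (update x i a) x i b
  rw [hammingDist_comm _ x, hammingDist_update_right_self, update_self] at h
  split_ifs at h <;> simp_all

theorem hammingDist_update_update_of_ne (x : ∀ i, β i) {i j : ι} (hij : i ≠ j) {a : β i}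
    {b : β j} (ha : a ≠ x i) (hb : b ≠ x j) :
    hammingDist (update x i a) (update x j b) = 2 := by
  have h := hammingDist_update_right_add (update x i a) x j b
  rw [hammingDist_comm _ x, hammingDist_update_right_self, update_of_ne hij.symm] at h
  simpa [ha.symm, hb.symm] using h

theorem exists_eq_update_of_hammingDist_eq_one {x y : ∀ i, β i} (h : hammingDist x y = 1) :
    ∃ i, ∃ a ≠ x i, y = update x i a := by
  obtain ⟨i, hi⟩ := card_eq_one.mp h
  have hdiff : ∀ j, x j ≠ y j ↔ j = i := fun j => by
    simpa using congrArg (j ∈ ·) hi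
  refine ⟨i, y i, fun e => (hdiff i).mpr rfl e.symm, funext fun j => ?_⟩
  rcases eq_or_ne j i with rfl | hj
  · rw [update_self]
  · rw [update_of_ne hj]
    exact (not_not.mp (mt (hdiff j).mp hj)).symm

/-- Comparing the distance to `o` with the distance to `update o i c` reveals whether `x i = c`. -/
theorem eq_of_hammingDist_update_eq {x x' o : ∀ i, β i}
    (h₀ : hammingDist x o = hammingDist x' o)
    (h : ∀ i c, hammingDist x (update o i c) = hammingDist x' (update o i c)) : x = x' := by
  funext i
  by_contra hne
  have hx := hammingDist_update_right_add x o i (x i)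
  have hx' := hammingDist_update_right_add x' o i (x i)
  have hy := hammingDist_update_right_add x o i (x' i)
  have hy' := hammingDist_update_right_add x' o i (x' i)
  rw [h] at hx hy
  split_ifs at hx hx' hy hy' <;> simp_all <;> omega

end hammingDist

namespace hammingGraph

variable {F : Type*} [DecidableEq F] {N : ℕ}

theorem adj_iff {x y : Fin N → F} : (hammingGraph F N).Adj x y ↔ hammingDist x y = 1 := by
  rw [hammingGraph, SimpleGraph.fromRel_adj, hammingDist_comm y x, or_self,
    and_iff_right_iff_imp, ← hammingDist_ne_zero]
  omega

theorem hammingDist_le_length {x y : Fin N → F} (p : (hammingGraph F N).Walk x y) :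
    hammingDist x y ≤ p.length := by
  induction p with
  | nil => simp
  | cons hadj _ ih =>
    rw [SimpleGraph.Walk.length_cons]
    exact (hammingDist_triangle _ _ _).trans (by rw [adj_iff.mp hadj]; omega)

theorem exists_walk_length_eq_hammingDist (x y : Fin N → F) :
    ∃ p : (hammingGraph F N).Walk x y, p.length = hammingDist x y := by
  induction h : hammingDist x y generalizing x with
  | zero => obtain rfl := hammingDist_eq_zero.mp h; exact ⟨.nil, rfl⟩
  | succ n ih =>
    obtain ⟨i, hi⟩ : ∃ i, x i ≠ y i := by
      by_contra! hxy; simp [funext hxy] at h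
    have hstep : hammingDist (update x i (y i)) y = n := by
      have := hammingDist_update_right_add y x i (y i)
      rw [hammingDist_comm y, hammingDist_comm y, h] at this
      simp [Ne.symm hi] at this
      omega
    obtain ⟨p, hp⟩ := ih _ hstep
    have hadj : (hammingGraph F N).Adj x (update x i (y i)) := by
      rw [adj_iff, hammingDist_update_right_self, if_neg hi]
    exact ⟨.cons hadj p, by simp [hp]⟩

theorem hammingDist_map_le (φ : hammingGraph F N →g hammingGraph F N) (x y : Fin N → F) :
    hammingDist (φ x) (φ y) ≤ hammingDist x y := by
  obtain ⟨p, hp⟩ := exists_walk_length_eq_hammingDist x y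
  simpa [hp] using hammingDist_le_length (p.map φ)

theorem hammingDist_map (φ : hammingGraph F N ≃g hammingGraph F N) (x y : Fin N → F) :
    hammingDist (φ x) (φ y) = hammingDist x y := by
  refine le_antisymm (hammingDist_map_le φ.toHom x y) ?_
  simpa using hammingDist_map_le φ.symm.toHom (φ x) (φ y)

theorem ext_of_apply_update_eq {φ φ' : hammingGraph F N ≃g hammingGraph F N} (o : Fin N → F)
    (h₀ : φ o = φ' o) (h : ∀ i c, φ (update o i c) = φ' (update o i c)) : φ = φ' := by
  refine RelIso.ext fun x => ?_
  suffices φ'.symm (φ x) = x by simpa using congrArg φ' this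
  refine eq_of_hammingDist_update_eq (o := o) ?_ fun i c => ?_
  · rw [← hammingDist_map φ', φ'.apply_symm_apply, ← h₀, hammingDist_map]
  · rw [← hammingDist_map φ', φ'.apply_symm_apply, ← h, hammingDist_map]

def ofPerms (π : Equiv.Perm (Fin N)) (ψ : Fin N → Equiv.Perm F) :
    hammingGraph F N ≃g hammingGraph F N where
  toEquiv := Equiv.piCongr (Z := fun _ => F) π ψ
  map_rel_iff' {x y} := by
    rw [adj_iff, adj_iff, ← hammingDist_comp (fun i => ψ i) (fun i => (ψ i).injective) (x := x)]
    simp only [hammingDist, card_filter]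
    rw [← Equiv.sum_comp π]
    simp [Equiv.piCongr_apply_apply]

@[simp]
theorem ofPerms_apply_apply (π : Equiv.Perm (Fin N)) (ψ : Fin N → Equiv.Perm F)
    (x : Fin N → F) (i : Fin N) : ofPerms π ψ x (π i) = ψ i (x i) :=
  Equiv.piCongr_apply_apply (Z := fun _ => F) π ψ x i

theorem ofPerms_apply (π : Equiv.Perm (Fin N)) (ψ : Fin N → Equiv.Perm F) (x : Fin N → F)
    (j : Fin N) : ofPerms π ψ x j = ψ (π.symm j) (x (π.symm j)) := by
  simpa using ofPerms_apply_apply π ψ x (π.symm j)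

theorem ofPerms_injective [Nontrivial F] :
    Injective fun p : Equiv.Perm (Fin N) × (Fin N → Equiv.Perm F) => ofPerms p.1 p.2 := by
  rintro ⟨π, ψ⟩ ⟨π', ψ'⟩ h
  have happ (x : Fin N → F) (j : Fin N) :
      ψ (π.symm j) (x (π.symm j)) = ψ' (π'.symm j) (x (π'.symm j)) := by
    rw [← ofPerms_apply, ← ofPerms_apply]
    exact congr_fun (DFunLike.congr_fun h x) j
  have hψ (j : Fin N) : ψ (π.symm j) = ψ' (π'.symm j) :=
    Equiv.ext fun a => happ (fun _ => a) j
  have hπ : π.symm = π'.symm := by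
    refine Equiv.ext fun j => ?_
    by_contra hne
    obtain ⟨a, b, hab⟩ := exists_pair_ne F
    have := happ (update (fun _ => a) (π.symm j) b) j
    rw [update_self, update_of_ne (Ne.symm hne), ← hψ j] at this
    exact hab ((ψ _).injective this).symm
  obtain rfl : π = π' := Equiv.symm_bijective.injective hπ
  simp only [Prod.mk.injEq, true_and]
  funext i
  simpa using hψ (π i)

/-- Two neighbours of `φ o` in different directions are at distance `2`, not `1`. -/
theorem exists_apply_update_eq_update [Nontrivial F] (φ : hammingGraph F N ≃g hammingGraph F N)
    (o : Fin N → F) (i : Fin N) :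
    ∃ k, ∀ c, φ (update o i c) = update (φ o) k (φ (update o i c) k) := by
  obtain ⟨a, ha⟩ := exists_ne (o i)
  have hdist : ∀ c ≠ o i, hammingDist (φ o) (φ (update o i c)) = 1 := fun c hc => by
    rw [hammingDist_map, hammingDist_update_right_self, if_neg hc.symm]
  obtain ⟨k, s, hs, hk⟩ := exists_eq_update_of_hammingDist_eq_one (hdist a ha)
  refine ⟨k, fun c => ?_⟩
  rcases eq_or_ne c (o i) with rfl | hc
  · simp
  obtain ⟨l, t, ht, hl⟩ := exists_eq_update_of_hammingDist_eq_one (hdist c hc)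
  obtain rfl : l = k := by
    by_contra hlk
    have := hammingDist_update_update_le_one o i c a
    rw [← hammingDist_map φ, hl, hk, hammingDist_update_update_of_ne _ hlk ht hs] at this
    omega
  rw [hl, update_self]

theorem ofPerms_surjective [Finite F] [Nontrivial F] :
    Surjective fun p : Equiv.Perm (Fin N) × (Fin N → Equiv.Perm F) => ofPerms p.1 p.2 := by
  intro φ
  let o : Fin N → F := fun _ => Classical.arbitrary F
  choose c hc using exists_apply_update_eq_update φ o
  have hc_inj : Injective c := by
    intro i i' hii'
    by_contra hne
    obtain ⟨a, ha⟩ := exists_ne (o i)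
    obtain ⟨a', ha'⟩ := exists_ne (o i')
    have h2 := hammingDist_update_update_of_ne o hne ha ha'
    rw [← hammingDist_map φ, hc i a, hc i' a', hii'] at h2
    have := h2.symm.trans_le (hammingDist_update_update_le_one _ _ _ _)
    omega
  have hψ_inj : ∀ i, Injective fun b => φ (update o i b) (c i) := by
    intro i b b' hbb'
    have : φ (update o i b) = φ (update o i b') := by
      rw [hc i b, hc i b']
      exact congrArg _ hbb'
    exact update_injective o i (φ.injective this)
  let π := Equiv.ofBijective c (Finite.injective_iff_bijective.mp hc_inj)
  let ψ i := Equiv.ofBijective _ (Finite.injective_iff_bijective.mp (hψ_inj i))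
  refine ⟨(π, ψ), ext_of_apply_update_eq o ?_ fun i b => ?_⟩ <;>
    funext j <;> obtain ⟨i', rfl⟩ := π.surjective j <;> rw [ofPerms_apply_apply]
  · simp [π, ψ]
  · rcases eq_or_ne i' i with rfl | hi'
    · simp [π, ψ]
    · rw [hc i b]
      simp [π, ψ, hi', hc_inj.ne hi']

end hammingGraph

/-- The automorphism group of the Hamming graph on `F^N` has order `(q!)^N · N!`. -/
theorem stmt14 (F : Type*) [Field F] [Fintype F] [DecidableEq F] (N : ℕ) :
    Nat.card (hammingGraph F N ≃g hammingGraph F N)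
      = (Fintype.card F).factorial ^ N * N.factorial := by
  rw [← Nat.card_eq_of_bijective _
      ⟨hammingGraph.ofPerms_injective, hammingGraph.ofPerms_surjective⟩,
    Nat.card_eq_fintype_card, Fintype.card_prod, Fintype.card_perm, Fintype.card_fun,
    Fintype.card_perm, Fintype.card_fin, mul_comm]
end

section
/- Let F be a finite field of order q. The number of distinct propelinear codes in F^N containing 0 is at most |Aut(F^N)|^{N·log₂ q} = ((q!)^N · N!)^{N log₂ q}. -/
open Finset

/-- A permutation of `F^N` is an automorphism of the Hamming graph iff it is
composed from a coordinate permutation and per-coordinate alphabet permutations. -/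
def IsHammAut {F : Type*} {N : ℕ} (g : Equiv.Perm (Fin N → F)) : Prop :=
  ∃ π : Equiv.Perm (Fin N), ∃ ψ : Fin N → Equiv.Perm F,
    ∀ x i, g x i = ψ i (x (π.symm i))

/-- A code `C ∋ 0` is propelinear if there are Hamming-graph automorphisms
`Φ_v` preserving `C` with `Φ_v 0 = v`, closed under composition. -/
def IsPropelinearCode {F : Type*} [Zero F] {N : ℕ} (C : Set (Fin N → F)) : Prop :=
  (0 : Fin N → F) ∈ C ∧ ∃ Φ : (Fin N → F) → Equiv.Perm (Fin N → F),
    (∀ v ∈ C, IsHammAut (Φ v) ∧ (Φ v) '' C = C ∧ Φ v 0 = v) ∧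
    (∀ a ∈ C, ∀ b ∈ C, Φ a * Φ b = Φ (Φ a b))
/-!
The maps `Φ_v` form a subgroup `S` of the Hamming automorphism group acting regularly on `C`,
so `|S| = |C| ≤ q^N` and `C` is the orbit of `0` under `S`. Adjoining to a subgroup an element
outside it at least doubles its order, so `S` is generated by `K = ⌊log₂ q^N⌋ ≤ N log₂ q` Hamming
automorphisms (padding with the identity). Hence `C` is determined by a `K`-tuple of Hamming
automorphisms, of which there are at most `((q!)^N N!)^K`.
-/

namespace Subgroup

variable {G : Type*} [Group G]

theorem two_mul_card_le_card_of_lt {H K : Subgroup G} [Finite K] (hHK : H < K) :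
    2 * Nat.card H ≤ Nat.card K := by
  have : Finite H := Finite.of_injective _ (inclusion_injective hHK.le)
  obtain ⟨m, hm⟩ := card_dvd_of_le hHK.le
  have hlt : Nat.card H * 1 < Nat.card H * m := by
    rw [mul_one, ← hm]
    exact lt_of_not_ge fun hge => hHK.ne (eq_of_le_of_card_ge hHK.le hge)
  rw [hm, mul_comm]
  exact Nat.mul_le_mul_left _ (Nat.lt_of_mul_lt_mul_left hlt)

variable [Finite G]

theorem exists_finset_closure_sup_eq_of_le {H K : Subgroup G} (hKH : K ≤ H) :
    ∃ s : Finset G, ↑s ⊆ (H : Set G) ∧ closure ↑s ⊔ K = H ∧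
      2 ^ s.card * Nat.card K ≤ Nat.card H := by
  classical
  induction K using WellFoundedGT.induction with
  | _ K ih =>
  by_cases hKH' : K = H
  · exact ⟨∅, by simp, by simp [hKH'], by simp [hKH']⟩
  obtain ⟨g, hgH, hgK⟩ : ∃ g ∈ H, g ∉ K := SetLike.exists_of_lt (lt_of_le_of_ne hKH hKH')
  have hlt : K < K ⊔ zpowers g :=
    lt_of_le_of_ne le_sup_left fun h => hgK (h ▸ mem_sup_right (mem_zpowers g))
  obtain ⟨s, hsH, hs, hcard⟩ :=
    ih _ hlt (sup_le hKH ((zpowers_le (H := H)).2 hgH))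
  refine ⟨insert g s, ?_, ?_, ?_⟩
  · rw [Finset.coe_insert]
    exact Set.insert_subset hgH hsH
  · rw [Finset.coe_insert, Set.insert_eq, closure_union, ← zpowers_eq_closure, ← hs]
    ac_rfl
  · calc 2 ^ (insert g s).card * Nat.card K
        ≤ 2 ^ (s.card + 1) * Nat.card K := by gcongr; exacts [one_le_two, Finset.card_insert_le _ _]
      _ = 2 ^ s.card * (2 * Nat.card K) := by ring
      _ ≤ 2 ^ s.card * Nat.card ↥(K ⊔ zpowers g) := by gcongr; exact two_mul_card_le_card_of_lt hlt
      _ ≤ Nat.card H := hcard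

theorem exists_finset_closure_eq_two_pow_card_le (H : Subgroup G) :
    ∃ s : Finset G, ↑s ⊆ (H : Set G) ∧ closure ↑s = H ∧ 2 ^ s.card ≤ Nat.card H := by
  simpa using exists_finset_closure_sup_eq_of_le (bot_le : ⊥ ≤ H)

theorem exists_fin_closure_range_eq (H : Subgroup G) {k : ℕ} (hk : Nat.log 2 (Nat.card H) ≤ k) :
    ∃ f : Fin k → G, (∀ i, f i ∈ H) ∧ closure (Set.range f) = H := by
  classical
  obtain ⟨s, hsH, hs, hcard⟩ := exists_finset_closure_eq_two_pow_card_le H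
  have hsk : s.card ≤ k := (Nat.le_log_of_pow_le one_lt_two hcard).trans hk
  set f : Fin k → G := fun i => s.toList.getD i 1
  have hf : ∀ i, f i ∈ insert 1 (s : Set G) := by
    intro i
    by_cases hi : (i : ℕ) < s.toList.length
    · right
      rw [Finset.mem_coe, ← Finset.mem_toList]
      simpa only [f, List.getD_eq_getElem _ _ hi] using List.getElem_mem hi
    · exact Or.inl (List.getD_eq_default _ _ (not_lt.1 hi))
  have hsf : (s : Set G) ⊆ Set.range f := by
    intro x hx
    obtain ⟨i, hi, rfl⟩ := List.mem_iff_getElem.1 (Finset.mem_toList.2 hx)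
    have hik : i < k := hi.trans_le ((Finset.length_toList s).trans_le hsk)
    exact ⟨⟨i, hik⟩, List.getD_eq_getElem _ _ hi⟩
  have hfH : ∀ i, f i ∈ H := fun i => Set.insert_subset (one_mem H) hsH (hf i)
  refine ⟨f, hfH, le_antisymm ?_ ?_⟩
  · exact (closure_le H).2 (Set.range_subset_iff.2 hfH)
  · exact hs ▸ closure_mono hsf

end Subgroup

theorem Submonoid.inv_mem_of_finite {G : Type*} [Group G] [Finite G] (M : Submonoid G) {x : G}
    (hx : x ∈ M) : x⁻¹ ∈ M :=
  Submonoid.powers_le.2 hx <|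
    mem_powers_iff_mem_zpowers.2 (Subgroup.inv_mem _ (Subgroup.mem_zpowers x))

theorem card_isHammAut_le (F : Type*) [Fintype F] (N : ℕ) :
    Nat.card {g : Equiv.Perm (Fin N → F) // IsHammAut g}
      ≤ (Fintype.card F).factorial ^ N * N.factorial := by
  have hsurj : Function.Surjective
      (fun p : (Fin N → Equiv.Perm F) × Equiv.Perm (Fin N) =>
        (⟨(Equiv.arrowCongr p.2 (Equiv.refl F)).trans (Equiv.piCongrRight p.1),
          ⟨p.2, p.1, fun _ _ => rfl⟩⟩ : {g : Equiv.Perm (Fin N → F) // IsHammAut g})) := by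
    rintro ⟨g, π, ψ, h⟩
    exact ⟨(ψ, π), Subtype.ext (Equiv.ext fun x => funext fun i => (h x i).symm)⟩
  calc Nat.card {g : Equiv.Perm (Fin N → F) // IsHammAut g}
      ≤ Nat.card ((Fin N → Equiv.Perm F) × Equiv.Perm (Fin N)) :=
        Nat.card_le_card_of_surjective _ hsurj
    _ = (Fintype.card F).factorial ^ N * N.factorial := by
        rw [Nat.card_prod, Nat.card_fun, Nat.card_perm, Nat.card_perm, Nat.card_fin,
          Nat.card_eq_fintype_card]

namespace IsPropelinearCode

variable {F : Type*} [Zero F] [Finite F] {N : ℕ} {C : Set (Fin N → F)}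

theorem exists_subgroup (hC : IsPropelinearCode C) :
    ∃ S : Subgroup (Equiv.Perm (Fin N → F)), (∀ g ∈ S, IsHammAut g) ∧
      (fun g => g 0) '' (S : Set (Equiv.Perm (Fin N → F))) = C ∧
      Nat.card S ≤ Nat.card (Fin N → F) := by
  obtain ⟨h0, Φ, hΦ, hmul⟩ := hC
  have hΦ0 : Φ 0 = 1 :=
    mul_left_cancel (a := Φ 0) (by rw [mul_one, hmul 0 h0 0 h0, (hΦ 0 h0).2.2])
  have hΦC : ∀ a ∈ C, ∀ b ∈ C, Φ a b ∈ C := fun a ha b hb =>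
    (hΦ a ha).2.1 ▸ Set.mem_image_of_mem _ hb
  let M : Submonoid (Equiv.Perm (Fin N → F)) :=
    { carrier := Φ '' C
      mul_mem' := by
        rintro _ _ ⟨a, ha, rfl⟩ ⟨b, hb, rfl⟩
        exact ⟨_, hΦC a ha b hb, (hmul a ha b hb).symm⟩
      one_mem' := ⟨0, h0, hΦ0⟩ }
  let S : Subgroup (Equiv.Perm (Fin N → F)) := { M with inv_mem' := M.inv_mem_of_finite }
  have hS : (S : Set (Equiv.Perm (Fin N → F))) = Φ '' C := rfl
  refine ⟨S, ?_, ?_, ?_⟩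
  · rintro _ ⟨v, hv, rfl⟩
    exact (hΦ v hv).1
  · rw [hS, Set.image_image]
    exact (Set.image_congr fun v hv => (hΦ v hv).2.2).trans (Set.image_id C)
  · refine Nat.card_le_card_of_injective (fun g : S => (g : Equiv.Perm (Fin N → F)) 0) ?_
    rintro ⟨_, v, hv, rfl⟩ ⟨_, w, hw, rfl⟩ h
    have hvw : v = w := by simpa only [(hΦ v hv).2.2, (hΦ w hw).2.2] using h
    subst hvw
    rfl

theorem exists_generators (hC : IsPropelinearCode C) :
    ∃ f : Fin (Nat.log 2 (Nat.card (Fin N → F))) → {g : Equiv.Perm (Fin N → F) // IsHammAut g},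
      (fun g => g 0) '' (Subgroup.closure (Set.range fun i => (f i).1) :
        Set (Equiv.Perm (Fin N → F))) = C := by
  obtain ⟨S, hSHamm, hSC, hScard⟩ := hC.exists_subgroup
  obtain ⟨f, hfS, hf⟩ := S.exists_fin_closure_range_eq (Nat.log_mono_right hScard)
  exact ⟨fun i => ⟨f i, hSHamm _ (hfS i)⟩, hf ▸ hSC⟩

end IsPropelinearCode

/-- The number of propelinear codes in `F^N` is at most
`((q!)^N · N!) ^ (N · log₂ q)`. -/
theorem stmt17 (F : Type*) [Field F] [Fintype F] (N : ℕ) :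
    (Nat.card {C : Set (Fin N → F) // IsPropelinearCode C} : ℝ)
      ≤ (((Fintype.card F).factorial ^ N * N.factorial : ℕ) : ℝ)
          ^ ((N : ℝ) * Real.logb 2 (Fintype.card F)) := by
  set K := Nat.log 2 (Nat.card (Fin N → F))
  set A := (Fintype.card F).factorial ^ N * N.factorial
  choose gens hgens using fun C : {C : Set (Fin N → F) // IsPropelinearCode C} =>
    C.2.exists_generators
  have hinj : Function.Injective gens := fun C C' h =>
    Subtype.ext (by rw [← hgens C, ← hgens C', h])
  have hcount : Nat.card {C : Set (Fin N → F) // IsPropelinearCode C} ≤ A ^ K :=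
    calc _ ≤ Nat.card (Fin K → {g : Equiv.Perm (Fin N → F) // IsHammAut g}) :=
          Nat.card_le_card_of_injective gens hinj
      _ ≤ A ^ K := by
          rw [Nat.card_fun, Nat.card_fin]
          exact Nat.pow_le_pow_left (card_isHammAut_le F N) K
  have hK : (K : ℝ) ≤ N * Real.logb 2 (Fintype.card F) :=
    calc (K : ℝ) ≤ Real.logb 2 (Nat.card (Fin N → F)) := by
          exact_mod_cast Real.natLog_le_logb _ 2
      _ = N * Real.logb 2 (Fintype.card F) := by
          rw [Nat.card_fun, Nat.card_fin, Nat.card_eq_fintype_card, Nat.cast_pow, Real.logb_pow]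
  have hA : (1 : ℝ) ≤ A := by exact_mod_cast Nat.one_le_iff_ne_zero.2 (by positivity)
  calc (Nat.card {C : Set (Fin N → F) // IsPropelinearCode C} : ℝ)
      ≤ (A : ℝ) ^ (K : ℝ) := by rw [Real.rpow_natCast]; exact_mod_cast hcount
    _ ≤ (A : ℝ) ^ (N * Real.logb 2 (Fintype.card F)) := Real.rpow_le_rpow_of_exponent_le hA hK
end
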